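/- There exists an integer k_0 such that for all k ≥ k_0 the following holds. Let y ∈ [0,1), u0 = y·2^{−k}, let γ0, η0 ∈ (0,1) satisfy the defining equations, and set ε0 = 1 − γ0². Then: 2(1−y)/(2^k − k − 1) − 4k(1−y)²/2^{2k} ≤ ε0 ≤ 2(1−y)/(2^k − k − 1), and η0 ≤ min{ y, y − (k+1)(1−y)/(2^k − k − 1) + 4k(1−y)²/2^k }. -/

import Mathlib

open Real

/-! With `ε = 1 - γ₀²` and `S = ε (2^k - 2y) + 2y`, the defining equations say exactly that
`S (1 - ε/2)^(k-1) = 2` and `η₀ S = 2y(1 - ε)`, while `η₀ > 0` forces `(k-1) ε < 1`.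
Bernoulli's inequality, applied from both sides to `(1 - ε/2)^(k-1)`, pins `S` between
`2 + (k-1)ε` and `2 + (k-1)ε + ((k-1)ε)²`; since `S` is affine in `ε`, this sandwiches `ε`,
and `η₀ = 2y(1 - ε)/S` is then estimated from the lower bound on `S`. Once `(k+1)² ≤ 2^k`,
all error terms have the announced size. -/

lemma one_sub_pow_mul_one_add_mul_le_one {t : ℝ} (ht0 : 0 ≤ t) (ht1 : t ≤ 1) (n : ℕ) :
    (1 - t) ^ n * (1 + n * t) ≤ 1 :=
  calc (1 - t) ^ n * (1 + n * t) ≤ (1 - t) ^ n * (1 + t) ^ n :=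
        mul_le_mul_of_nonneg_left (one_add_mul_le_pow (by linarith) n) (pow_nonneg (by linarith) n)
    _ = (1 - t ^ 2) ^ n := by rw [← mul_pow]; ring
    _ ≤ 1 := pow_le_one₀ (by nlinarith) (by nlinarith)

lemma Nat.succ_sq_le_two_pow {k : ℕ} (hk : 6 ≤ k) : (k + 1) ^ 2 ≤ 2 ^ k := by
  induction k, hk using Nat.le_induction with
  | base => norm_num
  | succ k hk ih => rw [pow_succ 2]; nlinarith

lemma natCast_mul_lt_one_of_mul_pow_lt_one {n : ℕ} {ε : ℝ} (hε0 : 0 ≤ ε) (hε1 : ε < 1)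
    (h : ε * (2 - ε) ^ n < 1) : n * ε < 1 := by
  have hbern : 1 + n * (1 - ε) ≤ (2 - ε) ^ n := by
    simpa only [show 1 + (1 - ε) = 2 - ε by ring] using
      one_add_mul_le_pow (a := 1 - ε) (by linarith) n
  have : n * ε * (1 - ε) < 1 - ε := by nlinarith [mul_le_mul_of_nonneg_left hbern hε0]
  nlinarith

lemma two_add_le_and_le_of_mul_one_sub_half_pow_eq {n : ℕ} {ε S : ℝ} (hε0 : 0 ≤ ε)
    (hε2 : ε ≤ 2) (hnε : n * ε ≤ 1) (hS : S * (1 - ε / 2) ^ n = 2) :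
    2 + n * ε ≤ S ∧ S ≤ 2 + n * ε + (n * ε) ^ 2 := by
  have hpow : 0 ≤ (1 - ε / 2) ^ n := pow_nonneg (by linarith) n
  have hSpos : 0 < S := pos_of_mul_pos_left (by rw [hS]; norm_num) hpow
  constructor
  · have h := one_sub_pow_mul_one_add_mul_le_one (t := ε / 2) (by linarith) (by linarith) n
    nlinarith [mul_le_mul_of_nonneg_left h hSpos.le]
  · have h := one_add_mul_le_pow (a := -(ε / 2)) (by linarith) n
    rw [← sub_eq_add_neg] at h
    have hle : S * (1 - n * ε / 2) ≤ 2 :=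
      calc S * (1 - n * ε / 2) = S * (1 + n * -(ε / 2)) := by ring
        _ ≤ S * (1 - ε / 2) ^ n := mul_le_mul_of_nonneg_left h hSpos.le
        _ = 2 := hS
    nlinarith [mul_nonneg (sq_nonneg (n * ε)) (by linarith : 0 ≤ 1 - n * ε)]

-- `S = ε (2^k - 2y) + 2y` is `2^k / (1 + γ₀²)^(k-1)`.
lemma defining_eqns_simplify {k : ℕ} (hk : 1 ≤ k) {y ε η : ℝ} (hε1 : ε < 1)
    (h1 : 1 - η = ε * (2 - ε) ^ (k - 1))
    (h2 : y * ((2 : ℝ) ^ k)⁻¹ = η / ((2 - ε) ^ k - (1 - η))) :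
    (ε * (2 ^ k - 2 * y) + 2 * y) * (1 - ε / 2) ^ (k - 1) = 2 ∧
      η * (ε * (2 ^ k - 2 * y) + 2 * y) = 2 * y * (1 - ε) := by
  obtain ⟨n, rfl⟩ : ∃ n, k = n + 1 := ⟨k - 1, by omega⟩
  rw [Nat.add_sub_cancel] at h1 ⊢
  set Q := (2 - ε) ^ n with hQ
  have hQpos : 0 < Q := pow_pos (by linarith) n
  have hden : (2 - ε) ^ (n + 1) - (1 - η) = 2 * (1 - ε) * Q := by rw [pow_succ, h1]; ring
  have hηP : η * 2 ^ (n + 1) = 2 * y * (1 - ε) * Q := by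
    rw [hden, ← div_eq_mul_inv, div_eq_div_iff (by positivity) (by nlinarith)] at h2
    linarith
  have hSQ : (ε * (2 ^ (n + 1) - 2 * y) + 2 * y) * Q = 2 ^ (n + 1) := by
    linear_combination -(2 : ℝ) ^ (n + 1) * h1 - hηP
  have hQ' : Q = 2 ^ n * (1 - ε / 2) ^ n := by rw [hQ, ← mul_pow]; ring_nf
  constructor
  · have : 2 ^ n * ((ε * (2 ^ (n + 1) - 2 * y) + 2 * y) * (1 - ε / 2) ^ n) = 2 ^ n * 2 := by
      rw [pow_succ] at hSQ ⊢; rw [hQ'] at hSQ; linear_combination hSQ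
    exact mul_left_cancel₀ (by positivity) this
  · refine mul_right_cancel₀ hQpos.ne' ?_
    linear_combination η * hSQ + hηP

section Estimates

variable {k P y ε S η : ℝ} (hk : 3 ≤ k) (hP : (k + 1) ^ 2 ≤ P)
include hk hP

lemma three_mul_le_four_mul_sub : 3 * P ≤ 4 * (P - k - 1) := by nlinarith

lemma le_min_of_mul_le (hy0 : 0 ≤ y) (hy1 : y ≤ 1)
    (h : η * (P - k - 1 + (k + 1) * (1 - y)) ≤ y * (P - k - 1)) :
    η ≤ min y (y - (k + 1) * (1 - y) / (P - k - 1) + 4 * k * (1 - y) ^ 2 / P) := by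
  have h3L := three_mul_le_four_mul_sub hk hP
  have hL : 0 < P - k - 1 := by nlinarith
  have hx : 0 ≤ 1 - y := by linarith
  set M := P - k - 1 + (k + 1) * (1 - y)
  have hLM : P - k - 1 ≤ M := by nlinarith
  have hM : 0 < M := by linarith
  have hηM : η ≤ y * (P - k - 1) / M := by rwa [le_div_iff₀ hM]
  refine le_min (hηM.trans ?_) (hηM.trans ?_)
  · rw [div_le_iff₀ hM]; nlinarith
  · have hPL : (k + 1) * P ^ 2 ≤ 4 * k * ((P - k - 1) * M) := by
      nlinarith [mul_le_mul_of_nonneg_left hLM (by nlinarith : 0 ≤ 4 * k * (P - k - 1))]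
    calc y * (P - k - 1) / M
        = y - (k + 1) * (1 - y) / (P - k - 1) + (k + 1) * (1 - y) ^ 2 * P / ((P - k - 1) * M) := by
          field_simp; ring
      _ ≤ y - (k + 1) * (1 - y) / (P - k - 1) + 4 * k * (1 - y) ^ 2 / P := by
          refine add_le_add le_rfl ?_
          rw [div_le_div_iff₀ (by positivity) (by nlinarith)]
          nlinarith [mul_le_mul_of_nonneg_left hPL (sq_nonneg (1 - y))]

variable (hS : S = ε * (P - 2 * y) + 2 * y)
include hS

lemma div_sub_le_eps (hy1 : y ≤ 1) (hSlb : 2 + (k - 1) * ε ≤ S) :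
    2 * (1 - y) / (P - k - 1) - 4 * k * (1 - y) ^ 2 / P ^ 2 ≤ ε := by
  have h3L := three_mul_le_four_mul_sub hk hP
  have hL : 0 < P - k - 1 := by nlinarith
  have hx : 0 ≤ 1 - y := by linarith
  have hlow : 2 * (1 - y) ≤ ε * (P - k - 1 + 2 * (1 - y)) := by rw [hS] at hSlb; linarith
  have hPL : P ^ 2 ≤ k * (P - k - 1) ^ 2 := by nlinarith
  have hcorr : 4 * (1 - y) ^ 2 / ((P - k - 1) * (P - k - 1 + 2 * (1 - y))) ≤
      4 * k * (1 - y) ^ 2 / P ^ 2 := by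
    rw [div_le_div_iff₀ (by positivity) (by nlinarith)]
    have hLL : k * (P - k - 1) ^ 2 ≤ k * ((P - k - 1) * (P - k - 1 + 2 * (1 - y))) := by
      gcongr; nlinarith
    nlinarith [mul_le_mul_of_nonneg_left (hPL.trans hLL) (by positivity : 0 ≤ 4 * (1 - y) ^ 2)]
  calc 2 * (1 - y) / (P - k - 1) - 4 * k * (1 - y) ^ 2 / P ^ 2
      ≤ 2 * (1 - y) / (P - k - 1) - 4 * (1 - y) ^ 2 / ((P - k - 1) * (P - k - 1 + 2 * (1 - y))) :=
        sub_le_sub_left hcorr _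
    _ = 2 * (1 - y) / (P - k - 1 + 2 * (1 - y)) := by field_simp; ring
    _ ≤ ε := by rwa [div_le_iff₀ (by positivity)]

lemma eps_mul_le (hy1 : y ≤ 1) (hε : 0 ≤ ε) (hkε : (k - 1) * ε ≤ 1)
    (hSub : S ≤ 2 + (k - 1) * ε + ((k - 1) * ε) ^ 2) :
    ε * (P - k - 1) ≤ 2 * (1 - y) := by
  have hkε0 : 0 ≤ (k - 1) * ε := mul_nonneg (by linarith) hε
  have hcrude : (k - 1) ^ 2 * ε ≤ 2 * (1 - y) := by
    rw [hS] at hSub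
    nlinarith [mul_le_mul_of_nonneg_left hkε hkε0]
  have hsq : ((k - 1) * ε) ^ 2 ≤ 2 * (1 - y) * ε := by
    nlinarith [mul_le_mul_of_nonneg_right hcrude hε]
  rw [hS] at hSub
  nlinarith

lemma eta_mul_le (hy0 : 0 ≤ y) (hε : 0 ≤ ε) (hSlb : 2 + (k - 1) * ε ≤ S)
    (hηS : η * S = 2 * y * (1 - ε)) :
    η * (P - k - 1 + (k + 1) * (1 - y)) ≤ y * (P - k - 1) := by
  have hL : 0 < P - k - 1 := by nlinarith
  have hSpos : 0 < S := by nlinarith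
  have hlow : 2 * (1 - y) ≤ ε * (P - k - 1 + 2 * (1 - y)) := by rw [hS] at hSlb; linarith
  have key : 2 * y * (1 - ε) * (P - k - 1 + (k + 1) * (1 - y)) ≤
      y * (P - k - 1) * (2 + (k - 1) * ε) := by
    nlinarith [mul_le_mul_of_nonneg_left hlow (by nlinarith : 0 ≤ y * (k + 1))]
  refine le_of_mul_le_mul_left ?_ hSpos
  calc S * (η * (P - k - 1 + (k + 1) * (1 - y)))
      = 2 * y * (1 - ε) * (P - k - 1 + (k + 1) * (1 - y)) := by rw [← hηS]; ring
    _ ≤ y * (P - k - 1) * (2 + (k - 1) * ε) := key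
    _ ≤ S * (y * (P - k - 1)) := by
        nlinarith [mul_le_mul_of_nonneg_left hSlb (by positivity : 0 ≤ y * (P - k - 1))]

end Estimates

theorem eps_eta_estimates :
    ∃ k0 : ℕ, ∀ k : ℕ, k0 ≤ k → ∀ y : ℝ, 0 ≤ y → y < 1 →
      ∀ u0 γ0 η0 : ℝ, u0 = y * ((2:ℝ)^k)⁻¹ →
        0 < γ0 → γ0 < 1 → 0 < η0 → η0 < 1 →
        1 - η0 = (1 - γ0^2) * (1 + γ0^2)^(k-1) →
        u0 = η0 / ((1 + γ0^2)^k - (1 - η0)) →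
        (2*(1-y)/((2:ℝ)^k - k - 1) - 4*k*(1-y)^2/(2:ℝ)^(2*k) ≤ 1 - γ0^2 ∧
          1 - γ0^2 ≤ 2*(1-y)/((2:ℝ)^k - k - 1)) ∧
        η0 ≤ min y (y - (k+1)*(1-y)/((2:ℝ)^k - k - 1) + 4*k*(1-y)^2/(2:ℝ)^k) := by
  refine ⟨6, fun k hk y hy0 hy1 u0 γ0 η0 hu0 hγ0 hγ1 hη0 _ h1 h2 => ?_⟩
  have hε0 : 0 < 1 - γ0 ^ 2 := by nlinarith
  have hε1 : 1 - γ0 ^ 2 < 1 := by nlinarith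
  rw [show 1 + γ0 ^ 2 = 2 - (1 - γ0 ^ 2) by ring] at h1 h2
  subst hu0
  generalize 1 - γ0 ^ 2 = ε at *
  obtain ⟨hS, hηS⟩ := defining_eqns_simplify (by omega) hε1 h1 h2
  have hkε := natCast_mul_lt_one_of_mul_pow_lt_one hε0.le hε1 (by linarith)
  obtain ⟨hSlb, hSub⟩ :=
    two_add_le_and_le_of_mul_one_sub_half_pow_eq hε0.le (by linarith) hkε.le hS
  rw [Nat.cast_pred (by omega)] at hkε hSlb hSub
  have hk3 : (3 : ℝ) ≤ k := by exact_mod_cast (by omega : 3 ≤ k)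
  have hP : ((k : ℝ) + 1) ^ 2 ≤ 2 ^ k := by exact_mod_cast Nat.succ_sq_le_two_pow hk
  have hL : 0 < (2 : ℝ) ^ k - k - 1 := by nlinarith
  refine ⟨⟨?_, ?_⟩, ?_⟩
  · rw [pow_mul']
    exact div_sub_le_eps hk3 hP rfl hy1.le hSlb
  · rw [le_div_iff₀ hL]
    exact eps_mul_le hk3 hP rfl hy1.le hε0.le hkε.le hSub
  · exact le_min_of_mul_le hk3 hP hy0 hy1.le (eta_mul_le hk3 hP rfl hy0 hε0.le hSlb hηS)
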